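/- Let C be a category with finite limits that has small coproducts and coequalizers of equivalence relations, such that equivalence relations are effective, effective epimorphisms are stable under pullback, and coproducts are disjoint and universal (i.e., C is an infinitary pretopos). Then C has all small colimits. -/

import Mathlib

open CategoryTheory CategoryTheory.Limits

universe v u

/-- The Mathlib (Dec 2024) notion of a disjoint binary coproduct, no longer in Mathlib. -/
class CoproductDisjoint {C : Type u} [Category.{v} C] (X₁ X₂ : C) where
  isInitialOfIsPullbackOfIsCoproduct :
    ∀ {X Z} {pX₁ : X₁ ⟶ X} {pX₂ : X₂ ⟶ X} {f : Z ⟶ X₁} {g : Z ⟶ X₂}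
      (_cX : IsColimit (BinaryCofan.mk pX₁ pX₂)) {comm : f ≫ pX₁ = g ≫ pX₂},
      IsLimit (PullbackCone.mk _ _ comm) → IsInitial Z
  mono_inl : ∀ (X) (X₁ : X₁ ⟶ X) (X₂ : X₂ ⟶ X) (_ : IsColimit (BinaryCofan.mk X₁ X₂)), Mono X₁
  mono_inr : ∀ (X) (X₁ : X₁ ⟶ X) (X₂ : X₂ ⟶ X) (_ : IsColimit (BinaryCofan.mk X₁ X₂)), Mono X₂

/-- The Mathlib (Dec 2024) notion: `C` has disjoint coproducts if every coproduct is disjoint. -/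
class CoproductsDisjoint (C : Type u) [Category.{v} C] where
  CoproductDisjoint : ∀ X Y : C, _root_.CoproductDisjoint X Y

variable (C : Type u) [Category.{v} C] [HasFiniteLimits C]

/-- An equivalence groupoid in `C`: a pair of objects with a monomorphism
`X₁ ⟶ X₀ ⨯ X₀` which is an internal equivalence relation. -/
structure EqGpd where
  X₀ : C
  X₁ : C
  d₀ : X₁ ⟶ X₀
  d₁ : X₁ ⟶ X₀
  mono : Mono (prod.lift d₀ d₁)
  refl : ∀ (T : C) (x : T ⟶ X₀), ∃ h : T ⟶ X₁, h ≫ d₀ = x ∧ h ≫ d₁ = x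
  symm : ∀ (T : C) (x y : T ⟶ X₀), (∃ h : T ⟶ X₁, h ≫ d₀ = x ∧ h ≫ d₁ = y) →
    ∃ h : T ⟶ X₁, h ≫ d₀ = y ∧ h ≫ d₁ = x
  trans : ∀ (T : C) (x y z : T ⟶ X₀),
    (∃ h : T ⟶ X₁, h ≫ d₀ = x ∧ h ≫ d₁ = y) →
    (∃ h : T ⟶ X₁, h ≫ d₀ = y ∧ h ≫ d₁ = z) →
    ∃ h : T ⟶ X₁, h ≫ d₀ = x ∧ h ≫ d₁ = z

namespace EqGpd

variable {C}

/-- A morphism of equivalence groupoids. -/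
@[ext]
structure Hom (A B : EqGpd C) where
  f₀ : A.X₀ ⟶ B.X₀
  f₁ : A.X₁ ⟶ B.X₁
  w₀ : f₁ ≫ B.d₀ = A.d₀ ≫ f₀
  w₁ : f₁ ≫ B.d₁ = A.d₁ ≫ f₀

instance : Category (EqGpd C) where
  Hom A B := Hom A B
  id A := ⟨𝟙 _, 𝟙 _, by simp, by simp⟩
  comp {A B D} f g := ⟨f.f₀ ≫ g.f₀, f.f₁ ≫ g.f₁,
    by rw [Category.assoc, g.w₀, ← Category.assoc, f.w₀, Category.assoc],
    by rw [Category.assoc, g.w₁, ← Category.assoc, f.w₁, Category.assoc]⟩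
  id_comp f := by apply Hom.ext <;> simp
  comp_id f := by apply Hom.ext <;> simp
  assoc f g h := by apply Hom.ext <;> simp

@[simp] lemma comp_f₀ {A B D : EqGpd C} (f : A ⟶ B) (g : B ⟶ D) :
    (f ≫ g).f₀ = f.f₀ ≫ g.f₀ := rfl

@[simp] lemma comp_f₁ {A B D : EqGpd C} (f : A ⟶ B) (g : B ⟶ D) :
    (f ≫ g).f₁ = f.f₁ ≫ g.f₁ := rfl

@[simp] lemma id_f₀ (A : EqGpd C) : (𝟙 A : A ⟶ A).f₀ = 𝟙 A.X₀ := rfl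

@[simp] lemma id_f₁ (A : EqGpd C) : (𝟙 A : A ⟶ A).f₁ = 𝟙 A.X₁ := rfl

/-- The homotopy relation on morphisms of equivalence groupoids. -/
def htpy : HomRel (EqGpd C) := fun {A B} f g =>
  ∃ h : A.X₀ ⟶ B.X₁, h ≫ B.d₀ = f.f₀ ∧ h ≫ B.d₁ = g.f₀

/-- The embedding of `C` into equivalence groupoids via diagonals. -/
def disc : C ⥤ EqGpd C where
  obj X :=
    { X₀ := X
      X₁ := X
      d₀ := 𝟙 X
      d₁ := 𝟙 X
      mono := ⟨fun {Z} g h w => by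
        have := congrArg (fun t => t ≫ (prod.fst : X ⨯ X ⟶ X)) w
        simp at this
        erw [prod.lift_fst, prod.lift_fst] at this
        exact this⟩
      refl := fun T x => ⟨x, by simp, by simp⟩
      symm := fun T x y ⟨h, h0, h1⟩ => ⟨h, by simpa using h1, by simpa using h0⟩
      trans := fun T x y z ⟨h, h0, h1⟩ ⟨k, k0, k1⟩ =>
        ⟨h, h0, by
          simp only [Category.comp_id] at h0 h1 k0 k1 ⊢
          rw [h1, ← k0]; exact k1⟩ }
  map {X Y} u := ⟨u, u, by simp, by simp⟩
  map_id X := by apply Hom.ext <;> simp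
  map_comp f g := by apply Hom.ext <;> simp

end EqGpd

/-- `f` is an effective epimorphism: it is the coequalizer of its kernel pair. -/
def IsEffectiveEpi {X Y : C} (f : X ⟶ Y) : Prop :=
  ∃ w : pullback.fst f f ≫ f = pullback.snd f f ≫ f,
    Nonempty (IsColimit (Cofork.ofπ f w))

/-!
Coproducts and coequalizers give all colimits, so it suffices to coequalize a pair
`f g : X ⟶ Y`. The hypotheses make `C` a regular category, so every span on `Y` factors as a
regular epimorphism onto a relation `R ↪ Y ⨯ Y`. Let `S` be the span `(f, g)` together with its
reverse and let `R` be the image of `∐ₙ Sⁿ`. It is reflexive and symmetric because the powers of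
`S` are, and it is transitive because, coproducts being universal,
`(∐ₘ Sᵐ) ×_Y (∐ₙ Sⁿ) = ∐ₘₙ Sᵐ ×_Y Sⁿ`, and `Sᵐ ×_Y Sⁿ` maps to `Sᵐ⁺ⁿ`. So `R` is the equivalence
relation generated by `(f, g)`, and its coequalizer, which exists by effectiveness, is a
coequalizer of `f` and `g`.
-/

namespace InfinitaryPretopos

variable {C : Type u} [Category.{v} C]

theorem isEffectiveEpi_iff_isRegularEpi [HasFiniteLimits C] {X Y : C} (f : X ⟶ Y) :
    IsEffectiveEpi C f ↔ IsRegularEpi f := by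
  constructor
  · rintro ⟨_, ⟨hc⟩⟩
    exact isRegularEpi_of_regularEpi (regularEpiOfKernelPair f hc)
  · intro
    exact ⟨pullback.condition,
      ⟨isColimitCoforkOfEffectiveEpi f (pullback.cone f f) (pullback.isLimit f f)⟩⟩

structure Span (Y : C) where
  obj : C
  s : obj ⟶ Y
  t : obj ⟶ Y

namespace Span

variable {Y : C}

instance : Preorder (Span Y) where
  le A B := ∃ g : A.obj ⟶ B.obj, g ≫ B.s = A.s ∧ g ≫ B.t = A.t
  le_refl A := ⟨𝟙 _, Category.id_comp _, Category.id_comp _⟩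
  le_trans _ _ _ := fun ⟨g, hs, ht⟩ ⟨g', hs', ht'⟩ =>
    ⟨g ≫ g', by rw [Category.assoc, hs', hs], by rw [Category.assoc, ht', ht]⟩

def diag (Y : C) : Span Y := ⟨Y, 𝟙 Y, 𝟙 Y⟩

abbrev reverse (A : Span Y) : Span Y := ⟨A.obj, A.t, A.s⟩

abbrev restrict (A : Span Y) {T : C} (τ : T ⟶ A.obj) : Span Y := ⟨T, τ ≫ A.s, τ ≫ A.t⟩

theorem reverse_le_reverse {A B : Span Y} (h : A ≤ B) : A.reverse ≤ B.reverse :=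
  let ⟨g, hs, ht⟩ := h; ⟨g, ht, hs⟩

section Comp

variable [HasPullbacks C]

noncomputable def comp (A B : Span Y) : Span Y :=
  ⟨pullback A.t B.s, pullback.fst _ _ ≫ A.s, pullback.snd _ _ ≫ B.t⟩

noncomputable def compFst (A B : Span Y) : (A.comp B).obj ⟶ A.obj := pullback.fst _ _

noncomputable def compSnd (A B : Span Y) : (A.comp B).obj ⟶ B.obj := pullback.snd _ _

theorem comp_s (A B : Span Y) : (A.comp B).s = compFst A B ≫ A.s := rfl

theorem comp_t (A B : Span Y) : (A.comp B).t = compSnd A B ≫ B.t := rfl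

theorem compFst_t (A B : Span Y) : compFst A B ≫ A.t = compSnd A B ≫ B.s := pullback.condition

theorem le_comp {A B D : Span Y} (a : D.obj ⟶ A.obj) (b : D.obj ⟶ B.obj)
    (w : a ≫ A.t = b ≫ B.s) (hs : a ≫ A.s = D.s) (ht : b ≫ B.t = D.t) : D ≤ A.comp B :=
  ⟨pullback.lift a b w,
    show pullback.lift a b w ≫ pullback.fst _ _ ≫ A.s = D.s by rw [pullback.lift_fst_assoc, hs],
    show pullback.lift a b w ≫ pullback.snd _ _ ≫ B.t = D.t by rw [pullback.lift_snd_assoc, ht]⟩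

theorem comp_le_comp {A A' B B' : Span Y} (hA : A ≤ A') (hB : B ≤ B') :
    A.comp B ≤ A'.comp B' := by
  obtain ⟨g, hgs, hgt⟩ := hA
  obtain ⟨k, hks, hkt⟩ := hB
  refine le_comp (compFst A B ≫ g) (compSnd A B ≫ k) ?_ ?_ ?_
  · rw [Category.assoc, hgt, compFst_t, Category.assoc, hks]
  · rw [Category.assoc, hgs, comp_s]
  · rw [Category.assoc, hkt, comp_t]

theorem comp_assoc_le (A B D : Span Y) : A.comp (B.comp D) ≤ (A.comp B).comp D := by
  obtain ⟨ab, hab_s, hab_t⟩ : (⟨_, compFst A _ ≫ A.s, compSnd A _ ≫ compFst B D ≫ B.t⟩ : Span Y) ≤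
      A.comp B :=
    le_comp (compFst A _) (compSnd A _ ≫ compFst B D)
      (by rw [compFst_t A (B.comp D), comp_s B D, Category.assoc]) rfl (Category.assoc _ _ _)
  refine le_comp ab (compSnd A _ ≫ compSnd B D) ?_ hab_s ?_
  · rw [hab_t, compFst_t, Category.assoc]
  · rw [Category.assoc, comp_t, comp_t]

theorem comp_diag_le (A : Span Y) : A.comp (diag Y) ≤ A :=
  ⟨compFst _ _, rfl, compFst_t A (diag Y)⟩

theorem le_diag_comp (A : Span Y) : A ≤ (diag Y).comp A :=
  le_comp A.s (𝟙 _) (by simp [diag]) (by simp [diag]) (Category.id_comp _)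

theorem reverse_comp_le (A B : Span Y) : (A.comp B).reverse ≤ B.reverse.comp A.reverse :=
  le_comp (compSnd A B) (compFst A B) (compFst_t A B).symm rfl rfl

noncomputable def pow (A : Span Y) : ℕ → Span Y
  | 0 => diag Y
  | n + 1 => (A.pow n).comp A

theorem le_pow_one (A : Span Y) : A ≤ A.pow 1 := le_diag_comp A

theorem pow_add_le (A : Span Y) (m : ℕ) : ∀ n, (A.pow m).comp (A.pow n) ≤ A.pow (m + n)
  | 0 => comp_diag_le _
  | n + 1 => calc
      (A.pow m).comp ((A.pow n).comp A) ≤ ((A.pow m).comp (A.pow n)).comp A := comp_assoc_le ..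
      _ ≤ (A.pow (m + n)).comp A := comp_le_comp (pow_add_le A m n) le_rfl

theorem reverse_pow_le {A : Span Y} (hA : A.reverse ≤ A) : ∀ n, (A.pow n).reverse ≤ A.pow n
  | 0 => le_rfl
  | n + 1 => calc
      ((A.pow n).comp A).reverse ≤ A.reverse.comp (A.pow n).reverse := reverse_comp_le ..
      _ ≤ (A.pow 1).comp (A.pow n) := comp_le_comp (hA.trans A.le_pow_one) (reverse_pow_le hA n)
      _ ≤ A.pow (n + 1) := by simpa only [Nat.add_comm] using A.pow_add_le 1 n

end Comp

section Sigma

variable {J : Type v} (A : J → Span Y) [HasCoproduct fun j => (A j).obj]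

noncomputable def sigma : Span Y :=
  ⟨∐ fun j => (A j).obj, Sigma.desc fun j => (A j).s, Sigma.desc fun j => (A j).t⟩

theorem reverse_sigma : (sigma A).reverse = sigma fun j => (A j).reverse := rfl

noncomputable def inj (j : J) : (A j).obj ⟶ (sigma A).obj := Sigma.ι (fun j => (A j).obj) j

theorem inj_s (j : J) : inj A j ≫ (sigma A).s = (A j).s := Sigma.ι_desc (fun j => (A j).s) j

theorem inj_t (j : J) : inj A j ≫ (sigma A).t = (A j).t := Sigma.ι_desc (fun j => (A j).t) j

theorem le_sigma (j : J) : A j ≤ sigma A := ⟨inj A j, inj_s A j, inj_t A j⟩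

variable {A} in
theorem sigma_le {B : Span Y} (h : ∀ j, A j ≤ B) : sigma A ≤ B := by
  choose g hs ht using h
  exact ⟨Sigma.desc g, Sigma.hom_ext _ _ fun j => by simp [sigma, hs],
    Sigma.hom_ext _ _ fun j => by simp [sigma, ht]⟩

end Sigma

theorem le_of_isColimit_cofan {J : Type*} {P : J → C} {A R : Span Y} (p : ∀ j, P j ⟶ A.obj)
    (hc : IsColimit (Cofan.mk A.obj p)) (h : ∀ j, A.restrict (p j) ≤ R) : A ≤ R := by
  choose g hs ht using h
  exact ⟨Cofan.IsColimit.desc hc g,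
    Cofan.IsColimit.hom_ext hc _ _ fun j => (Cofan.IsColimit.fac_assoc hc g j R.s).trans (hs j),
    Cofan.IsColimit.hom_ext hc _ _ fun j => (Cofan.IsColimit.fac_assoc hc g j R.t).trans (ht j)⟩

section Relation

variable [HasFiniteLimits C]

theorem le_of_restrict_le {A R : Span Y} (hR : Mono (prod.lift R.s R.t)) {T : C}
    (τ : T ⟶ A.obj) [StrongEpi τ] (h : A.restrict τ ≤ R) : A ≤ R := by
  obtain ⟨φ, hs, ht⟩ := h
  have sq : CommSq φ τ (prod.lift R.s R.t) (prod.lift A.s A.t) :=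
    ⟨by ext <;> simp [hs, ht]⟩
  have := StrongEpi.llp (f := τ) (prod.lift R.s R.t)
  exact ⟨sq.lift, by simpa only [Category.assoc, prod.lift_fst] using sq.fac_right =≫ prod.fst,
    by simpa only [Category.assoc, prod.lift_snd] using sq.fac_right =≫ prod.snd⟩

structure IsEquivalence (R : Span Y) : Prop where
  mono : Mono (prod.lift R.s R.t)
  diag_le : diag Y ≤ R
  reverse_le : R.reverse ≤ R
  comp_le : R.comp R ≤ R

theorem IsEquivalence.pow_le {A K : Span Y} (hK : K.IsEquivalence) (hA : A ≤ K) :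
    ∀ n, A.pow n ≤ K
  | 0 => hK.diag_le
  | n + 1 => (comp_le_comp (hK.pow_le hA n) hA).trans hK.comp_le

def IsEquivalence.toEqGpd {R : Span Y} (hR : R.IsEquivalence) : EqGpd C where
  X₀ := Y
  X₁ := R.obj
  d₀ := R.s
  d₁ := R.t
  mono := hR.mono
  refl T x := le_trans (⟨x, Category.comp_id x, Category.comp_id x⟩ : (⟨T, x, x⟩ : Span Y) ≤ diag Y)
    hR.diag_le
  symm T x y (h : (⟨T, x, y⟩ : Span Y) ≤ R) := (reverse_le_reverse h).trans hR.reverse_le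
  trans T x y z (h₁ : (⟨T, x, y⟩ : Span Y) ≤ R) (h₂ : (⟨T, y, z⟩ : Span Y) ≤ R) := by
    obtain ⟨g₁, hs₁, ht₁⟩ := h₁
    obtain ⟨g₂, hs₂, ht₂⟩ := h₂
    exact le_trans (le_comp g₁ g₂ (ht₁.trans hs₂.symm) hs₁ ht₂ : (⟨T, x, z⟩ : Span Y) ≤ R.comp R)
      hR.comp_le

theorem isEquivalence_of_isKernelPair {X Z K : C} {f : X ⟶ Z} {a b : K ⟶ X}
    (h : IsKernelPair f a b) : (⟨K, a, b⟩ : Span X).IsEquivalence where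
  mono := ⟨fun g g' hg => h.hom_ext
    (by simpa only [Category.assoc, prod.lift_fst] using hg =≫ prod.fst)
    (by simpa only [Category.assoc, prod.lift_snd] using hg =≫ prod.snd)⟩
  diag_le := ⟨h.lift (𝟙 _) (𝟙 _) rfl, h.lift_fst .., h.lift_snd ..⟩
  reverse_le := ⟨h.lift b a h.w.symm, h.lift_fst .., h.lift_snd ..⟩
  comp_le := ⟨h.lift (compFst _ _ ≫ a) (compSnd _ _ ≫ b) (by
      simp only [Category.assoc, h.w]
      rw [← Category.assoc, compFst_t, Category.assoc, h.w]),
    h.lift_fst .., h.lift_snd ..⟩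

noncomputable def kernelPair {Z : C} (r : Y ⟶ Z) : Span Y :=
  ⟨pullback r r, pullback.fst _ _, pullback.snd _ _⟩

theorem isEquivalence_kernelPair {Z : C} (r : Y ⟶ Z) : (kernelPair r).IsEquivalence :=
  isEquivalence_of_isKernelPair (IsPullback.of_hasPullback r r)

theorem le_kernelPair_iff {A : Span Y} {Z : C} {r : Y ⟶ Z} :
    A ≤ kernelPair r ↔ A.s ≫ r = A.t ≫ r := by
  constructor
  · rintro ⟨g, hs, ht⟩
    rw [← hs, ← ht, Category.assoc, Category.assoc]
    exact congrArg (g ≫ ·) pullback.condition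
  · intro w
    exact ⟨pullback.lift _ _ w, pullback.lift_fst _ _ w, pullback.lift_snd _ _ w⟩

theorem sigma_comp_sigma_le {J : Type v} (A : J → Span Y) [HasCoproduct fun j => (A j).obj]
    (huniv : IsUniversalColimit (colimit.cocone (Discrete.functor fun j => (A j).obj)))
    {R : Span Y} (h : ∀ i j, (A i).comp (A j) ≤ R) : (sigma A).comp (sigma A) ≤ R := by
  let ι₂ (p : J × J) : ((A p.1).comp (A p.2)).obj ⟶ ((sigma A).comp (sigma A)).obj :=
    pullback.map _ _ _ _ (inj A p.1) (inj A p.2) (𝟙 Y)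
      ((Category.comp_id _).trans (inj_t A p.1).symm)
      ((Category.comp_id _).trans (inj_s A p.2).symm)
  obtain ⟨hc⟩ := huniv.nonempty_isColimit_prod_of_isPullback huniv (fun i => (A i).t)
    (fun j => (A j).s) (sigma A).t (sigma A).s (fun i j => IsPullback.of_hasPullback _ _)
    (IsPullback.of_hasPullback _ _) (d := Cofan.mk _ ι₂) (Iso.refl _) (inj_t A) (inj_s A)
    (fun _ _ => (congrArg (_ ≫ ·) (Category.id_comp _)).trans (pullback.lift_fst _ _ _))
    (fun _ _ => (congrArg (_ ≫ ·) (Category.id_comp _)).trans (pullback.lift_snd _ _ _))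
  refine le_of_isColimit_cofan ι₂ hc fun ⟨i, j⟩ =>
    le_trans (⟨𝟙 _, ?_, ?_⟩ : ((sigma A).comp (sigma A)).restrict (ι₂ (i, j)) ≤ (A i).comp (A j))
      (h i j)
  · have : ι₂ (i, j) ≫ compFst _ _ = compFst _ _ ≫ inj A i := pullback.lift_fst _ _ _
    show 𝟙 _ ≫ compFst _ _ ≫ (A i).s = ι₂ (i, j) ≫ compFst _ _ ≫ (sigma A).s
    rw [reassoc_of% this, inj_s, Category.id_comp]
  · have : ι₂ (i, j) ≫ compSnd _ _ = compSnd _ _ ≫ inj A j := pullback.lift_snd _ _ _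
    show 𝟙 _ ≫ compSnd _ _ ≫ (A j).t = ι₂ (i, j) ≫ compSnd _ _ ≫ (sigma A).t
    rw [reassoc_of% this, inj_t, Category.id_comp]

structure IsEquivalenceClosure (A R : Span Y) : Prop where
  isEquivalence : R.IsEquivalence
  le : A ≤ R
  minimal : ∀ K : Span Y, K.IsEquivalence → A ≤ K → R ≤ K

theorem IsEquivalenceClosure.coequalizes_iff {A R : Span Y} (h : A.IsEquivalenceClosure R)
    {Z : C} (r : Y ⟶ Z) : A.s ≫ r = A.t ≫ r ↔ R.s ≫ r = R.t ≫ r := by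
  simp only [← le_kernelPair_iff]
  exact ⟨h.minimal _ (isEquivalence_kernelPair r), h.le.trans⟩

end Relation

end Span

theorem regular_of_isEffectiveEpi_pullback_snd [HasFiniteLimits C]
    (hcoeq : ∀ ⦃Y : C⦄ (R : Span Y), R.IsEquivalence → HasCoequalizer R.s R.t)
    (hstab : ∀ {X Y Z : C} (f : X ⟶ Y) (g : Z ⟶ Y),
      IsEffectiveEpi C f → IsEffectiveEpi C (pullback.snd f g)) : Regular C where
  hasCoequalizer_of_isKernelPair h := hcoeq _ (Span.isEquivalence_of_isKernelPair h)
  regularEpiIsStableUnderBaseChange := .of_forall_exists_isPullback fun f g _ hg =>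
    ⟨_, _, _, (IsPullback.of_hasPullback g f).flip, (isEffectiveEpi_iff_isRegularEpi _).1
      (hstab g f ((isEffectiveEpi_iff_isRegularEpi g).2 hg))⟩

namespace Span

variable [Regular C] {Y : C}

structure IsImage (A R : Span Y) : Prop where
  mono : Mono (prod.lift R.s R.t)
  exists_cover : ∃ e : A.obj ⟶ R.obj, IsRegularEpi e ∧ e ≫ R.s = A.s ∧ e ≫ R.t = A.t

theorem exists_isImage (A : Span Y) : ∃ R, A.IsImage R := by
  let F := Regular.strongEpiMonoFactorisation (prod.lift A.s A.t)
  have hm : prod.lift (F.m ≫ prod.fst) (F.m ≫ prod.snd) = F.m :=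
    prod.hom_ext (prod.lift_fst _ _) (prod.lift_snd _ _)
  refine ⟨⟨F.I, F.m ≫ prod.fst, F.m ≫ prod.snd⟩, ⟨?_, F.e, inferInstance, ?_, ?_⟩⟩
  · show Mono (prod.lift (F.m ≫ prod.fst) (F.m ≫ prod.snd))
    rw [hm]
    exact F.m_mono
  · exact (F.fac_assoc _).trans (prod.lift_fst _ _)
  · exact (F.fac_assoc _).trans (prod.lift_snd _ _)

variable {A R : Span Y}

theorem IsImage.le (h : A.IsImage R) : A ≤ R :=
  let ⟨e, _, hs, ht⟩ := h.exists_cover; ⟨e, hs, ht⟩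

theorem IsImage.le_of_le (h : A.IsImage R) {D : Span Y} (hD : Mono (prod.lift D.s D.t))
    (hAD : A ≤ D) : R ≤ D := by
  obtain ⟨e, _, hs, ht⟩ := h.exists_cover
  exact le_of_restrict_le hD e (le_trans (⟨𝟙 _, by simp [hs], by simp [ht]⟩ : R.restrict e ≤ A) hAD)

theorem IsImage.reverse_le (h : A.IsImage R) (hA : A.reverse ≤ R) : R.reverse ≤ R := by
  obtain ⟨e, _, hs, ht⟩ := h.exists_cover
  exact le_of_restrict_le h.mono e
    (le_trans (⟨𝟙 _, by simp [ht], by simp [hs]⟩ : R.reverse.restrict e ≤ A.reverse) hA)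

theorem IsImage.comp_le (h : A.IsImage R) (hA : A.comp A ≤ R) : R.comp R ≤ R := by
  obtain ⟨e, _, hs, ht⟩ := h.exists_cover
  -- Pulling `e` back along both projections covers `R.comp R` by a regular epi from an object
  -- lying over `A.comp A`.
  let τ₁ := pullback.snd e (compFst R R)
  let τ₂ := pullback.snd e (τ₁ ≫ compSnd R R)
  have h₁ : pullback.fst e _ ≫ e = τ₁ ≫ compFst R R := pullback.condition
  have h₂ : pullback.fst e _ ≫ e = τ₂ ≫ τ₁ ≫ compSnd R R := pullback.condition
  refine le_of_restrict_le h.mono τ₁ (le_of_restrict_le h.mono τ₂ (le_trans ?_ hA))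
  refine le_comp (τ₂ ≫ pullback.fst e _) (pullback.fst e _) ?_ ?_ ?_
  · rw [Category.assoc, ← ht, reassoc_of% h₁, compFst_t, ← hs, reassoc_of% h₂]
  · rw [Category.assoc, ← hs, reassoc_of% h₁]
    rfl
  · rw [← ht, reassoc_of% h₂]
    rfl

theorem exists_isEquivalenceClosure [HasCoproducts.{v} C]
    (huniv : ∀ {J : Type v} (F : J → C), IsUniversalColimit (colimit.cocone (Discrete.functor F)))
    (A : Span Y) : ∃ R, A.IsEquivalenceClosure R := by
  let B : ULift.{v} Bool → Span Y := fun b => cond b.down A A.reverse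
  let S : Span Y := sigma B
  have hS : S.reverse ≤ S := by
    rw [reverse_sigma]
    refine sigma_le fun b => ?_
    rcases b with ⟨_ | _⟩
    exacts [le_sigma B (.up true), le_sigma B (.up false)]
  let P : ULift.{v} ℕ → Span Y := fun n => S.pow n.down
  obtain ⟨R, hR⟩ := exists_isImage (sigma P)
  have hPR (n : ℕ) : S.pow n ≤ R := (le_sigma P ⟨n⟩).trans hR.le
  have hequiv : R.IsEquivalence :=
    { mono := hR.mono
      diag_le := hPR 0
      reverse_le := hR.reverse_le <| by
        rw [reverse_sigma]
        exact sigma_le fun n => (reverse_pow_le hS _).trans (hPR _)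
      comp_le := hR.comp_le <|
        sigma_comp_sigma_le P (huniv _) fun m n => (pow_add_le S _ _).trans (hPR _) }
  refine ⟨R, hequiv, ((le_sigma B (.up true)).trans S.le_pow_one).trans (hPR 1), fun K hK hAK => ?_⟩
  refine hR.le_of_le hK.mono (sigma_le fun n => hK.pow_le (sigma_le fun b => ?_) _)
  rcases b with ⟨_ | _⟩
  exacts [(reverse_le_reverse hAK).trans hK.reverse_le, hAK]

end Span

theorem hasCoequalizer_of_coequalizes_iff {X X' Y : C} {f g : X ⟶ Y} {f' g' : X' ⟶ Y}
    [HasCoequalizer f' g'] (h : ∀ {Z : C} (r : Y ⟶ Z), f ≫ r = g ≫ r ↔ f' ≫ r = g' ≫ r) :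
    HasCoequalizer f g :=
  HasColimit.mk ⟨Cofork.ofπ (coequalizer.π f' g') ((h _).2 (coequalizer.condition f' g')),
    Cofork.IsColimit.mk _ (fun s => coequalizer.desc s.π ((h _).1 s.condition))
      (fun _ => coequalizer.π_desc _ _)
      (fun _ _ hm => coequalizer.hom_ext (hm.trans (coequalizer.π_desc _ _).symm))⟩

theorem hasCoequalizers_of_regular [Regular C] [HasCoproducts.{v} C]
    (huniv : ∀ {J : Type v} (F : J → C), IsUniversalColimit (colimit.cocone (Discrete.functor F)))
    (hcoeq : ∀ ⦃Y : C⦄ (R : Span Y), R.IsEquivalence → HasCoequalizer R.s R.t) :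
    HasCoequalizers C := by
  have {X Y : C} {f g : X ⟶ Y} : HasCoequalizer f g := by
    obtain ⟨R, hR⟩ := Span.exists_isEquivalenceClosure huniv (⟨X, f, g⟩ : Span Y)
    have := hcoeq R hR.isEquivalence
    exact hasCoequalizer_of_coequalizes_iff hR.coequalizes_iff
  exact hasCoequalizers_of_hasColimit_parallelPair C

end InfinitaryPretopos

/-- an infinitary pretopos (finite limits, small disjoint universal
coproducts, effective equivalence relations, pullback-stable effective epimorphisms)
has all small colimits. -/
theorem hasColimits_of_infinitary_pretopos
    [∀ J : Type v, HasColimitsOfShape (Discrete J) C]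
    (hdisj : Nonempty (CoproductsDisjoint C))
    (huniv : ∀ {J : Type v} (F : Discrete J ⥤ C) (c : Cocone F),
      IsColimit c → IsUniversalColimit c)
    (heff : ∀ A : EqGpd C, ∃ (Q : C) (q : A.X₀ ⟶ Q) (w : A.d₀ ≫ q = A.d₁ ≫ q),
      Nonempty (IsColimit (Cofork.ofπ q w)) ∧ IsIso (pullback.lift A.d₀ A.d₁ w))
    (hstab : ∀ {X Y Z : C} (f : X ⟶ Y) (g : Z ⟶ Y),
      IsEffectiveEpi C f → IsEffectiveEpi C (pullback.snd f g)) :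
    HasColimits C := by
  have hcoeq : ∀ ⦃Y : C⦄ (R : InfinitaryPretopos.Span Y), R.IsEquivalence →
      HasCoequalizer R.s R.t := by
    intro Y R hR
    obtain ⟨Q, q, w, ⟨hc⟩, -⟩ := heff hR.toEqGpd
    exact HasColimit.mk ⟨_, hc⟩
  have : Regular C := InfinitaryPretopos.regular_of_isEffectiveEpi_pullback_snd hcoeq hstab
  have : HasCoequalizers C :=
    InfinitaryPretopos.hasCoequalizers_of_regular (fun _ => huniv _ _ (colimit.isColimit _)) hcoeq
  exact has_colimits_of_hasCoequalizers_and_coproducts
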